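/- arXiv:1103.2289 — 2 statements merged into one kernel-verified Lean document; each statement's English description precedes it below -/
import Mathlib

section
/- In the setting of the previous invariant with M a commutative monoid, suppose after some sequence of steps exactly one index a has v_a possibly different from e and v_l = e for all l ≠ a. Then v_a = Π_l x_l. -/
/-! The product of all node values is invariant under a send-and-fuse step, since the step only
regroups the factors `v i` and `v j` and replaces one of them by the identity. Hence it equals the
product of the initial values at every time, and once all but one node hold the identity this
product is the value at the remaining node. -/

section

variable {ι M : Type*} [CommMonoid M]

def IsSendFuseStep (u w : ι → M) : Prop :=
  ∃ i j : ι, i ≠ j ∧ w j = u i * u j ∧ w i = 1 ∧ ∀ l : ι, l ≠ i → l ≠ j → w l = u l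

variable [Fintype ι]

theorem IsSendFuseStep.prod_eq [DecidableEq ι] {u w : ι → M} (h : IsSendFuseStep u w) :
    ∏ l, w l = ∏ l, u l := by
  obtain ⟨i, j, hij, hj, hi, hrest⟩ := h
  have hi_mem : i ∈ Finset.univ.erase j := Finset.mem_erase.2 ⟨hij, Finset.mem_univ i⟩
  have hrest' : ∀ l ∈ (Finset.univ.erase j).erase i, w l = u l := fun l hl => by
    simp only [Finset.mem_erase] at hl
    exact hrest l hl.1 hl.2.1
  rw [← Finset.mul_prod_erase _ w (Finset.mem_univ j), ← Finset.mul_prod_erase _ w hi_mem,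
    ← Finset.mul_prod_erase _ u (Finset.mem_univ j), ← Finset.mul_prod_erase _ u hi_mem,
    Finset.prod_congr rfl hrest', hi, hj]
  ac_rfl

theorem prod_eq_prod_zero_of_isSendFuseStep {v : ℕ → ι → M}
    (hstep : ∀ k, IsSendFuseStep (v k) (v (k + 1))) (k : ℕ) :
    ∏ l, v k l = ∏ l, v 0 l := by
  classical
  induction k with
  | zero => rfl
  | succ k ih => rw [(hstep k).prod_eq, ih]

end

/-- If after some sequence of send-and-fuse steps in a commutative monoid all
values except the one at node `a` equal the identity, then node `a` holds the
exact aggregate `∏ l, x l` of all initial values. -/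
theorem unique_active_node_holds_aggregate
    (M : Type*) [CommMonoid M]
    (n : ℕ) (x : Fin n → M) (v : ℕ → Fin n → M)
    (h0 : v 0 = x)
    (hstep : ∀ k : ℕ, ∃ i j : Fin n, i ≠ j ∧
      v (k + 1) j = v k i * v k j ∧
      v (k + 1) i = 1 ∧
      ∀ l : Fin n, l ≠ i → l ≠ j → v (k + 1) l = v k l)
    (k : ℕ) (a : Fin n)
    (hothers : ∀ l : Fin n, l ≠ a → v k l = 1) :
    v k a = ∏ l, x l := by
  rw [← Fintype.prod_eq_single a hothers, prod_eq_prod_zero_of_isSendFuseStep hstep k, h0]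
end

section
/- Moreover, in the combined system where nodes carry both value v_l (in a commutative monoid M, initially x_l) and counter c_l (initially 1), updated jointly by send-and-fuse steps, if c_a = n for some node a then v_a = Π_l x_l. -/
/-!
Each send-and-fuse step preserves the product of the values and the sum of the counters, and
keeps every node with counter `0` at value `1`. Initially these are `∏ l, x l`, `n`, and vacuous.
So when a single node holds counter `n`, every other counter is `0`, every other value is `1`,
and that node's value is the whole product.
-/

open Finset

section Fusion

variable {ι M : Type*} [CommMonoid M]

@[to_additive]
theorem prod_eq_prod_of_fuse [Fintype ι] {f g : ι → M} {i j : ι} (hij : i ≠ j)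
    (hj : g j = f i * f j) (hi : g i = 1) (hrest : ∀ l, l ≠ i → l ≠ j → g l = f l) :
    ∏ l, g l = ∏ l, f l := by
  classical
  have hsub : ({i, j} : Finset ι) ⊆ univ := subset_univ _
  have hcompl : ∏ l ∈ univ \ {i, j}, g l = ∏ l ∈ univ \ {i, j}, f l :=
    prod_congr rfl fun l hl => by
      simp only [mem_sdiff, mem_insert, mem_singleton, not_or] at hl
      exact hrest l hl.2.1 hl.2.2
  rw [← prod_sdiff hsub, ← prod_sdiff hsub (f := f), hcompl, prod_pair hij, prod_pair hij,
    hi, hj, one_mul]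

def FuseStep (v v' : ι → M) (c c' : ι → ℕ) : Prop :=
  ∃ i j : ι, i ≠ j ∧
    v' j = v i * v j ∧ v' i = 1 ∧
    c' j = c i + c j ∧ c' i = 0 ∧
    ∀ l : ι, l ≠ i → l ≠ j → v' l = v l ∧ c' l = c l

namespace FuseStep

variable {v v' : ι → M} {c c' : ι → ℕ}

theorem prod_eq [Fintype ι] (h : FuseStep v v' c c') : ∏ l, v' l = ∏ l, v l := by
  obtain ⟨i, j, hij, hvj, hvi, -, -, hrest⟩ := h
  exact prod_eq_prod_of_fuse hij hvj hvi fun l hli hlj => (hrest l hli hlj).1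

theorem sum_eq [Fintype ι] (h : FuseStep v v' c c') : ∑ l, c' l = ∑ l, c l := by
  obtain ⟨i, j, hij, -, -, hcj, hci, hrest⟩ := h
  exact sum_eq_sum_of_fuse hij hcj hci fun l hli hlj => (hrest l hli hlj).2

theorem eq_one_of_eq_zero (h : FuseStep v v' c c') (hidle : ∀ l, c l = 0 → v l = 1) :
    ∀ l, c' l = 0 → v' l = 1 := by
  obtain ⟨i, j, -, hvj, hvi, hcj, -, hrest⟩ := h
  intro l hl
  by_cases hli : l = i
  · rwa [hli]
  by_cases hlj : l = j
  · subst hlj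
    rw [hcj, Nat.add_eq_zero_iff] at hl
    rw [hvj, hidle i hl.1, hidle l hl.2, one_mul]
  · obtain ⟨hv, hc⟩ := hrest l hli hlj
    rw [hv]
    exact hidle l (hc ▸ hl)

end FuseStep

section Trajectory

variable {v : ℕ → ι → M} {c : ℕ → ι → ℕ}

theorem prod_eq_prod_zero_of_fuseStep [Fintype ι]
    (hstep : ∀ k, FuseStep (v k) (v (k + 1)) (c k) (c (k + 1))) (k : ℕ) :
    ∏ l, v k l = ∏ l, v 0 l := by
  induction k with
  | zero => rfl
  | succ k ih => exact (hstep k).prod_eq.trans ih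

theorem sum_eq_sum_zero_of_fuseStep [Fintype ι]
    (hstep : ∀ k, FuseStep (v k) (v (k + 1)) (c k) (c (k + 1))) (k : ℕ) :
    ∑ l, c k l = ∑ l, c 0 l := by
  induction k with
  | zero => rfl
  | succ k ih => exact (hstep k).sum_eq.trans ih

theorem eq_one_of_eq_zero_of_fuseStep (hstep : ∀ k, FuseStep (v k) (v (k + 1)) (c k) (c (k + 1)))
    (hc0 : ∀ l, 0 < c 0 l) (k : ℕ) :
    ∀ l, c k l = 0 → v k l = 1 := by
  induction k with
  | zero => exact fun l hl => absurd hl (hc0 l).ne'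
  | succ k ih => exact (hstep k).eq_one_of_eq_zero ih

end Trajectory

theorem eq_prod_of_eq_sum [Fintype ι] {v : ι → M} {c : ι → ℕ} {a : ι}
    (hidle : ∀ l, c l = 0 → v l = 1) (ha : c a = ∑ l, c l) : v a = ∏ l, v l := by
  classical
  have hothers : ∑ l ∈ univ.erase a, c l = 0 := by
    have := add_sum_erase univ c (mem_univ a)
    omega
  refine (prod_eq_single a (fun l _ hla => hidle l ?_) (absurd (mem_univ a))).symm
  exact sum_eq_zero_iff.mp hothers l (mem_erase.mpr ⟨hla, mem_univ l⟩)

end Fusion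

/-- Combined system: values in a commutative monoid (initially `x l`) and
counters (initially `1`), jointly updated by send-and-fuse steps. If the
counter at some node `a` reaches `n` at time `k`, then that node's value is the
exact aggregate `∏ l, x l`. -/
theorem count_n_implies_aggregate
    (M : Type*) [CommMonoid M]
    (n : ℕ) (x : Fin n → M) (v : ℕ → Fin n → M) (c : ℕ → Fin n → ℕ)
    (hv0 : v 0 = x) (hc0 : ∀ l : Fin n, c 0 l = 1)
    (hstep : ∀ k : ℕ, ∃ i j : Fin n, i ≠ j ∧
      v (k + 1) j = v k i * v k j ∧ v (k + 1) i = 1 ∧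
      c (k + 1) j = c k i + c k j ∧ c (k + 1) i = 0 ∧
      ∀ l : Fin n, l ≠ i → l ≠ j → v (k + 1) l = v k l ∧ c (k + 1) l = c k l)
    (k : ℕ) (a : Fin n) (ha : c k a = n) :
    v k a = ∏ l, x l := by
  have hfuse : ∀ k, FuseStep (v k) (v (k + 1)) (c k) (c (k + 1)) := hstep
  have hsum : ∑ l, c k l = n := by
    simp [sum_eq_sum_zero_of_fuseStep hfuse k, hc0]
  have hidle := eq_one_of_eq_zero_of_fuseStep hfuse (fun l => by simp [hc0]) k
  rw [← hv0, ← prod_eq_prod_zero_of_fuseStep hfuse k]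
  exact eq_prod_of_eq_sum hidle (ha.trans hsum.symm)
end
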